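/- For the cycle graph C_n with n ≥ 4 and n ≠ 5, the independent secure domination number equals ⌈3n/7⌉. -/

import Mathlib

variable {V : Type*} [Fintype V] [DecidableEq V]

/-- `S` is a dominating set of `G`: every vertex is in `S` or adjacent to a vertex of `S`. -/
def DomSet (G : SimpleGraph V) (S : Finset V) : Prop :=
  ∀ v : V, v ∈ S ∨ ∃ u ∈ S, G.Adj u v

/-- `S` is a secure dominating set of `G`. -/
def SecDomSet (G : SimpleGraph V) (S : Finset V) : Prop :=
  DomSet G S ∧ ∀ u ∉ S, ∃ v ∈ S, G.Adj u v ∧ DomSet G (insert u (S.erase v))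

/-- `S` is an independent set of `G`. -/
def IndepSet (G : SimpleGraph V) (S : Finset V) : Prop :=
  ∀ a ∈ S, ∀ b ∈ S, ¬ G.Adj a b

/-- `S` is an independent secure dominating set of `G`. -/
def InSDS (G : SimpleGraph V) (S : Finset V) : Prop :=
  IndepSet G S ∧ SecDomSet G S

/-- The independent secure domination number `γ_is(G)`. -/
noncomputable def gammaIS (G : SimpleGraph V) : ℕ :=
  sInf {k | ∃ S : Finset V, InSDS G S ∧ S.card = k}

/-! On a cycle of length `n ≥ 4`, an independent set `S` is secure dominating exactly when every
vertex `u ∉ S` has `u - 1, u - 3 ∈ S` or `u + 1, u + 3 ∈ S`: after swapping `u` with its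
defender `u ∓ 1`, the vertex `u ∓ 2` can only be dominated by `u ∓ 3`. These local rules put at
least three vertices of `S` into any seven consecutive vertices, and summing over the `n` windows
gives `3n ≤ 7|S|`. Conversely, for `n ≥ 4`, `n ≠ 5` write `n = 7m + 2t` with
`3m + t = ⌈3n/7⌉`; taking positions `0, 3, 5` of each of `m` blocks of seven vertices and then
every other vertex of the remaining `2t` satisfies the local rules. -/

open Finset SimpleGraph Fin.CommRing

section General

omit [Fintype V]

variable {G : SimpleGraph V}

lemma gammaIS_eq_of_forall_le {k : ℕ} (hk : ∃ S, InSDS G S ∧ #S = k)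
    (hle : ∀ S, InSDS G S → k ≤ #S) : gammaIS G = k :=
  le_antisymm (Nat.sInf_le hk) (le_csInf ⟨k, hk⟩ (by rintro _ ⟨S, hS, rfl⟩; exact hle S hS))

lemma DomSet.insert_erase {S : Finset V} {u v : V} (hS : DomSet G S) (huv : G.Adj u v)
    (hv : ∀ w, G.Adj v w → w ≠ u → ∃ s ∈ S.erase v, s = w ∨ G.Adj s w) :
    DomSet G (insert u (S.erase v)) := by
  intro w
  obtain rfl | hwu := eq_or_ne w u
  · exact Or.inl (mem_insert_self w _)
  by_cases hwv : w = v
  · exact Or.inr ⟨u, mem_insert_self u _, hwv ▸ huv⟩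
  obtain hw | ⟨s, hs, hsw⟩ := hS w
  · exact Or.inl (mem_insert_of_mem (mem_erase.2 ⟨hwv, hw⟩))
  by_cases hsv : s = v
  · obtain ⟨s', hs', rfl | hs'w⟩ := hv w (hsv ▸ hsw) hwu
    · exact Or.inl (mem_insert_of_mem hs')
    · exact Or.inr ⟨s', mem_insert_of_mem hs', hs'w⟩
  · exact Or.inr ⟨s, mem_insert_of_mem (mem_erase.2 ⟨hsv, hs⟩), hsw⟩

end General

lemma Fin.natCast_ne_zero_of_lt {n k : ℕ} [NeZero n] (hk : k ≠ 0) (hkn : k < n) :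
    (k : Fin n) ≠ 0 := by
  rw [Ne, Fin.natCast_eq_zero]
  exact fun h => hk (Nat.eq_zero_of_dvd_of_lt h hkn)

lemma Fin.val_sub_eq_ite {n : ℕ} (a b : Fin n) :
    (a - b).val = if b.val ≤ a.val then a.val - b.val else n + a.val - b.val := by
  split_ifs with h
  · exact Fin.coe_sub_iff_le.2 h
  · exact Fin.coe_sub_iff_lt.2 (not_le.1 h)

lemma card_filter_add_mem {α : Type*} [AddGroup α] [Fintype α] [DecidableEq α] (S : Finset α)
    (a : α) : #{i | i + a ∈ S} = #S := by
  rw [← card_map (Equiv.addRight a).toEmbedding]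
  congr 1
  ext j
  simp

lemma Nat.count_congr_of_lt {p q : ℕ → Prop} [DecidablePred p] [DecidablePred q] {n : ℕ}
    (h : ∀ k < n, p k ↔ q k) : Nat.count p n = Nat.count q n := by
  simp only [Nat.count_eq_card_filter_range]
  exact congrArg card (filter_congr fun k hk => h k (mem_range.1 hk))

lemma two_lt_card_window {p : ℤ → Prop} [DecidablePred p] (hI : ∀ a, p a → ¬p (a + 1))
    (hsec : ∀ a, ¬p a → (p (a - 1) ∧ p (a - 3)) ∨ (p (a + 1) ∧ p (a + 3))) :
    2 < #{a ∈ Ico (0 : ℤ) 7 | p a} := by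
  have of_three : ∀ a b c : ℤ, 0 ≤ a ∧ a < b ∧ b < c ∧ c < 7 → p a → p b → p c →
      2 < #{a ∈ Ico (0 : ℤ) 7 | p a} := fun a b c habc ha hb hc =>
    two_lt_card.2 ⟨a, by simp [ha]; omega, b, by simp [hb]; omega, c, by simp [hc]; omega,
      by omega, by omega, by omega⟩
  have hD : ∀ a, ¬p a → p (a - 1) ∨ p (a + 1) := fun a ha => by
    rcases hsec a ha with h | h
    exacts [Or.inl h.1, Or.inr h.1]
  by_cases p0 : p 0
  · have p1 : ¬p 1 := hI 0 p0
    by_cases p2 : p 2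
    · have p3 : ¬p 3 := hI 2 p2
      by_cases p4 : p 4
      · exact of_three 0 2 4 (by norm_num) p0 p2 p4
      · have p5 : p 5 := (hD 4 p4).resolve_left p3
        exact of_three 0 2 5 (by norm_num) p0 p2 p5
    · have p3 : p 3 := (hD 2 p2).resolve_left p1
      have p4 : ¬p 4 := hI 3 p3
      by_cases p5 : p 5
      · exact of_three 0 3 5 (by norm_num) p0 p3 p5
      · have p6 : p 6 := (hD 5 p5).resolve_left p4
        exact of_three 0 3 6 (by norm_num) p0 p3 p6
  · by_cases p1 : p 1
    · have p2 : ¬p 2 := hI 1 p1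
      by_cases p3 : p 3
      · have p4 : ¬p 4 := hI 3 p3
        by_cases p5 : p 5
        · exact of_three 1 3 5 (by norm_num) p1 p3 p5
        · have p6 : p 6 := (hD 5 p5).resolve_left p4
          exact of_three 1 3 6 (by norm_num) p1 p3 p6
      · have p4 : p 4 := (hD 3 p3).resolve_left p2
        have p6 : p 6 := ((hsec 3 p3).resolve_left fun h => p2 h.1).2
        exact of_three 1 4 6 (by norm_num) p1 p4 p6
    · have p2 : p 2 := (hD 1 p1).resolve_left p0
      have p3 : ¬p 3 := hI 2 p2
      have p4 : p 4 := ((hsec 1 p1).resolve_left fun h => p0 h.1).2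
      have p6 : p 6 := ((hsec 3 p3).resolve_left fun h => p0 h.2).2
      exact of_three 2 4 6 (by norm_num) p2 p4 p6

section CycleGraph

variable {n : ℕ} [NeZero n]

lemma cycleGraph_adj_iff (hn : 3 ≤ n) {u v : Fin n} :
    (cycleGraph n).Adj u v ↔ u = v + 1 ∨ v = u + 1 := by
  have hval : ∀ a b : Fin n, (a - b).val = 1 ↔ a = b + 1 := fun a b => by
    rw [← sub_eq_iff_eq_add', Fin.ext_iff, Fin.val_one', Nat.mod_eq_of_lt (by omega)]
  rw [cycleGraph_adj', hval, hval]

lemma domSet_cycleGraph_iff (hn : 3 ≤ n) {S : Finset (Fin n)} :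
    DomSet (cycleGraph n) S ↔ ∀ v, v ∈ S ∨ v - 1 ∈ S ∨ v + 1 ∈ S := by
  refine forall_congr' fun v => or_congr_right ?_
  simp only [cycleGraph_adj_iff hn]
  constructor
  · rintro ⟨u, hu, rfl | rfl⟩
    · exact Or.inr hu
    · exact Or.inl (by rwa [add_sub_cancel_right])
  · rintro (h | h)
    · exact ⟨_, h, Or.inr (sub_add_cancel v 1).symm⟩
    · exact ⟨_, h, Or.inl rfl⟩

def IsLocallySecure (S : Finset (Fin n)) : Prop :=
  (∀ u ∈ S, u + 1 ∉ S) ∧ ∀ u ∉ S, (u - 1 ∈ S ∧ u - 3 ∈ S) ∨ (u + 1 ∈ S ∧ u + 3 ∈ S)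

lemma InSDS.isLocallySecure (hn : 4 ≤ n) {S : Finset (Fin n)}
    (hS : InSDS (cycleGraph n) S) : IsLocallySecure S := by
  have h1 : (1 : Fin n) ≠ 0 := Fin.natCast_ne_zero_of_lt (k := 1) one_ne_zero (by omega)
  have h2 : (2 : Fin n) ≠ 0 := Fin.natCast_ne_zero_of_lt (k := 2) two_ne_zero (by omega)
  have h3 : (3 : Fin n) ≠ 0 := Fin.natCast_ne_zero_of_lt (k := 3) three_ne_zero (by omega)
  have adj : ∀ {a b : Fin n}, (cycleGraph n).Adj a b ↔ a = b + 1 ∨ b = a + 1 :=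
    cycleGraph_adj_iff (by omega)
  obtain ⟨hI, -, hsec⟩ := hS
  have hI' : ∀ u ∈ S, u + 1 ∉ S := fun u hu hu1 => hI u hu _ hu1 (adj.2 (Or.inr rfl))
  refine ⟨hI', fun u hu => ?_⟩
  obtain ⟨v, hv, huv, hdom⟩ := hsec u hu
  have hdom' := (domSet_cycleGraph_iff (by omega)).1 hdom
  rcases adj.1 huv with rfl | rfl
  · -- after the swap, `v - 1` can only be dominated by `v - 2`
    left
    refine ⟨by rwa [add_sub_cancel_right], ?_⟩
    rcases hdom' (v - 1) with h | h | h <;> simp only [mem_insert, mem_erase] at h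
    · rcases h with h | ⟨-, h⟩
      · exact absurd (by linear_combination -h) h2
      · exact absurd (by rwa [sub_add_cancel]) (hI' _ h)
    · rcases h with h | ⟨-, h⟩
      · exact absurd (by linear_combination -h) h3
      · convert h using 1; ring
    · rcases h with h | ⟨h, -⟩
      · exact absurd (by linear_combination -h) h1
      · exact absurd (sub_add_cancel v 1) h
  · -- after the swap, `u + 2` can only be dominated by `u + 3`
    right
    refine ⟨hv, ?_⟩
    rcases hdom' (u + 1 + 1) with h | h | h <;> simp only [mem_insert, mem_erase] at h
    · rcases h with h | ⟨-, h⟩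
      · exact absurd (by linear_combination h) h2
      · exact absurd h (hI' _ hv)
    · rcases h with h | ⟨h, -⟩
      · exact absurd (by linear_combination h) h1
      · exact absurd (add_sub_cancel_right _ _) h
    · rcases h with h | ⟨-, h⟩
      · exact absurd (by linear_combination h) h3
      · convert h using 1; ring

lemma IsLocallySecure.inSDS (hn : 3 ≤ n) {S : Finset (Fin n)} (hS : IsLocallySecure S) :
    InSDS (cycleGraph n) S := by
  have h2 : (2 : Fin n) ≠ 0 := Fin.natCast_ne_zero_of_lt (k := 2) two_ne_zero (by omega)
  have adj : ∀ {a b : Fin n}, (cycleGraph n).Adj a b ↔ a = b + 1 ∨ b = a + 1 :=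
    cycleGraph_adj_iff hn
  obtain ⟨hI, hsec⟩ := hS
  have hdom : DomSet (cycleGraph n) S := (domSet_cycleGraph_iff hn).2 fun v => by
    by_cases hv : v ∈ S
    · exact Or.inl hv
    · rcases hsec v hv with ⟨h, -⟩ | ⟨h, -⟩
      · exact Or.inr (Or.inl h)
      · exact Or.inr (Or.inr h)
  refine ⟨?_, hdom, fun u hu => ?_⟩
  · intro a ha b hb hab
    rcases adj.1 hab with rfl | rfl
    · exact hI b hb ha
    · exact hI a ha hb
  rcases hsec u hu with ⟨hv, hs⟩ | ⟨hv, hs⟩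
  · have huv : (cycleGraph n).Adj u (u - 1) := adj.2 (Or.inl (sub_add_cancel u 1).symm)
    refine ⟨u - 1, hv, huv, hdom.insert_erase huv fun w hw hwu => ?_⟩
    rcases adj.1 hw with h | h
    · refine ⟨u - 3, mem_erase.2 ⟨fun h' => h2 ?_, hs⟩, Or.inr (adj.2 (Or.inr ?_))⟩
      · linear_combination -h'
      · linear_combination -h
    · exact absurd (by rw [h, sub_add_cancel]) hwu
  · have huv : (cycleGraph n).Adj u (u + 1) := adj.2 (Or.inr rfl)
    refine ⟨u + 1, hv, huv, hdom.insert_erase huv fun w hw hwu => ?_⟩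
    rcases adj.1 hw with h | h
    · exact absurd (add_right_cancel h).symm hwu
    · refine ⟨u + 3, mem_erase.2 ⟨fun h' => h2 ?_, hs⟩, Or.inr (adj.2 (Or.inl ?_))⟩
      · linear_combination h'
      · linear_combination -h

theorem three_mul_le_seven_mul_card (hn : 4 ≤ n) {S : Finset (Fin n)}
    (hS : InSDS (cycleGraph n) S) : 3 * n ≤ 7 * #S := by
  obtain ⟨hI, hsec⟩ := hS.isLocallySecure hn
  have hwin (i : Fin n) : 2 < #{a ∈ Ico (0 : ℤ) 7 | i + ((a : ℤ) : Fin n) ∈ S} := by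
    refine two_lt_card_window (p := fun a : ℤ => i + (a : Fin n) ∈ S)
      (fun a ha => ?_) (fun a ha => ?_)
    · push_cast
      rw [← add_assoc]
      exact hI _ ha
    · push_cast
      simp only [← add_assoc, ← add_sub_assoc]
      exact hsec _ ha
  calc 3 * n = ∑ _i : Fin n, 3 := by simp [mul_comm]
    _ ≤ ∑ i : Fin n, #{a ∈ Ico (0 : ℤ) 7 | i + ((a : ℤ) : Fin n) ∈ S} :=
      sum_le_sum fun i _ => hwin i
    _ = ∑ a ∈ Ico (0 : ℤ) 7, #{i | i + (a : Fin n) ∈ S} := by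
      simp only [card_filter]
      exact sum_comm
    _ = 7 * #S := by simp [card_filter_add_mem]

end CycleGraph

def InBlockPattern (m x : ℕ) : Prop :=
  (x < 7 * m ∧ (x % 7 = 0 ∨ x % 7 = 3 ∨ x % 7 = 5)) ∨ (7 * m ≤ x ∧ (x - 7 * m) % 2 = 0)

instance (m : ℕ) : DecidablePred (InBlockPattern m) := fun _ => by
  unfold InBlockPattern; infer_instance

lemma count_inBlockPattern (m t : ℕ) :
    Nat.count (InBlockPattern m) (7 * m + 2 * t) = 3 * m + t := by
  have blocks : ∀ j ≤ m, Nat.count (InBlockPattern m) (7 * j) = 3 * j := by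
    intro j
    induction j with
    | zero => simp
    | succ j ih =>
      intro hj
      rw [mul_add_one, Nat.count_add, ih (by omega),
        Nat.count_congr_of_lt (q := (· ∈ ({0, 3, 5} : Finset ℕ))) fun k hk => by
          simp only [InBlockPattern, mem_insert, mem_singleton]; omega]
      rfl
  have tail : ∀ s, Nat.count (fun k => InBlockPattern m (7 * m + k)) (2 * s) = s := by
    intro s
    induction s with
    | zero => simp
    | succ s ih =>
      rw [mul_add_one, Nat.count_add, ih,
        Nat.count_congr_of_lt (q := (· = 0)) fun k hk => by simp only [InBlockPattern]; omega]
      rfl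
  rw [Nat.count_add, blocks m le_rfl, tail]

def cyclePattern (n m : ℕ) : Finset (Fin n) := {v | InBlockPattern m v}

lemma card_cyclePattern {n m t : ℕ} (hn : n = 7 * m + 2 * t) :
    #(cyclePattern n m) = 3 * m + t := by
  rw [cyclePattern, card_filter,
    Fin.sum_univ_eq_sum_range (fun x => if InBlockPattern m x then 1 else 0), ← card_filter,
    ← Nat.count_eq_card_filter_range, hn, count_inBlockPattern]

lemma isLocallySecure_cyclePattern {n m t : ℕ} [NeZero n] (hnm : n = 7 * m + 2 * t)
    (hn : 4 ≤ n) : IsLocallySecure (cyclePattern n m) := by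
  have h1 : (1 : Fin n).val = 1 := by
    simp only [Fin.coe_ofNat_eq_mod]; exact Nat.mod_eq_of_lt (by omega)
  have h3 : (3 : Fin n).val = 3 := by
    simp only [Fin.coe_ofNat_eq_mod]; exact Nat.mod_eq_of_lt (by omega)
  simp only [IsLocallySecure, cyclePattern, mem_filter, mem_univ, true_and,
    Fin.val_add_eq_ite, Fin.val_sub_eq_ite, h1, h3]
  refine ⟨fun u hu => ?_, fun u hu => ?_⟩
  · have := u.isLt
    unfold InBlockPattern at *
    split_ifs <;> omega
  · have := u.isLt
    have hc : (u.val < 7 * m ∧ (u.val % 7 = 2 ∨ u.val % 7 = 4)) ∨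
        (u.val < 7 * m ∧ (u.val % 7 = 1 ∨ u.val % 7 = 6)) ∨
        (7 * m ≤ u.val ∧ (u.val - 7 * m) % 2 = 1) := by
      unfold InBlockPattern at hu; omega
    unfold InBlockPattern
    -- offsets `2, 4` of a block are defended from the right, other outside vertices from the left
    rcases hc with hc | hc | hc
    · right
      constructor
      · split_ifs <;> omega
      · -- `u + 3` wraps around (to `0`) only if `t = 0`
        rcases Nat.eq_zero_or_pos t with rfl | ht <;> split_ifs <;> omega
    all_goals left; constructor
    all_goals split_ifs <;> omega

lemma exists_seven_mul_add_two_mul {n : ℕ} (hn : 4 ≤ n) (hn5 : n ≠ 5) :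
    ∃ m t, n = 7 * m + 2 * t ∧ 3 * m + t = (3 * n + 6) / 7 :=
  ⟨n - 2 * ((3 * n + 6) / 7), (3 * n + 6) / 7 - 3 * (n - 2 * ((3 * n + 6) / 7)), by omega,
    by omega⟩

theorem stmt8 (n : ℕ) (hn : 4 ≤ n) (hn5 : n ≠ 5) :
    gammaIS (SimpleGraph.cycleGraph n) = (3 * n + 6) / 7 := by
  have : NeZero n := ⟨by omega⟩
  obtain ⟨m, t, hmt, hk⟩ := exists_seven_mul_add_two_mul hn hn5
  refine gammaIS_eq_of_forall_le ⟨cyclePattern n m, ?_, by rw [card_cyclePattern hmt, hk]⟩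
    fun S hS => ?_
  · exact (isLocallySecure_cyclePattern hmt hn).inSDS (by omega)
  · have := three_mul_le_seven_mul_card hn hS
    omega
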